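/- arXiv:math/9605230 — 3 statements merged into one kernel-verified Lean document; each statement's English description precedes it below -/
import Mathlib

section
/- (q-binomial theorem) Let q, a, z be complex numbers with |q| < 1 and |z| < 1. Then ∑_{k=0}^∞ [(a;q)_k / (q;q)_k] z^k = (az;q)_∞ / (z;q)_∞. -/
/-- The finite q-shifted factorial `(a;q)_k = ∏_{j=0}^{k-1} (1 - a q^j)`. -/
noncomputable def qPoch (a q : ℂ) (k : ℕ) : ℂ := ∏ j ∈ Finset.range k, (1 - a * q ^ j)

/-- The infinite q-shifted factorial `(a;q)_∞ = ∏_{j=0}^{∞} (1 - a q^j)`. -/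
noncomputable def qPochInf (a q : ℂ) : ℂ := ∏' j : ℕ, (1 - a * q ^ j)

open Filter Topology

private lemma geom_partial_le {K : ℝ} (hK0 : 0 ≤ K) (hK1 : K < 1) (k : ℕ) :
    ∑ j ∈ Finset.range k, K ^ j ≤ (1 - K)⁻¹ := by
  have := Summable.sum_le_tsum (Finset.range k) (fun i _ => pow_nonneg hK0 i)
    (summable_geometric_of_lt_one hK0 hK1)
  rwa [tsum_geometric_of_lt_one hK0 hK1] at this

private lemma qPoch_abs_le {a q : ℂ} (hq : ‖q‖ < 1) (k : ℕ) :
    ‖qPoch a q k‖ ≤ Real.exp (‖a‖ / (1 - ‖q‖)) := by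
  set K := ‖q‖ with hK
  have hK0 : 0 ≤ K := norm_nonneg q
  rw [qPoch, norm_prod]
  calc ∏ j ∈ Finset.range k, ‖1 - a * q ^ j‖
      ≤ ∏ j ∈ Finset.range k, Real.exp (‖a‖ * K ^ j) := by
        apply Finset.prod_le_prod (fun j _ => norm_nonneg _)
        intro j _
        calc ‖1 - a * q ^ j‖ ≤ 1 + ‖a‖ * K ^ j := by
              have := norm_sub_le (1 : ℂ) (a * q ^ j)
              simpa [norm_mul, norm_pow] using this
          _ ≤ Real.exp (‖a‖ * K ^ j) := by
              have := Real.add_one_le_exp (‖a‖ * K ^ j); linarith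
    _ = Real.exp (∑ j ∈ Finset.range k, ‖a‖ * K ^ j) := (Real.exp_sum _ _).symm
    _ ≤ Real.exp (‖a‖ / (1 - K)) := by
        apply Real.exp_le_exp.2
        rw [← Finset.mul_sum, div_eq_mul_inv]
        exact mul_le_mul_of_nonneg_left (geom_partial_le hK0 hq k) (norm_nonneg a)

private lemma exp_le_one_sub {t q0 : ℝ} (ht : 0 ≤ t) (htq : t ≤ q0) (hq0 : q0 < 1) :
    Real.exp (-(t / (1 - q0))) ≤ 1 - t := by
  have h1 : (0:ℝ) < 1 - q0 := by linarith
  have h2 : 1 + t / (1 - q0) ≤ Real.exp (t / (1 - q0)) := by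
    have := Real.add_one_le_exp (t / (1 - q0)); linarith
  have h3 : (1:ℝ) ≤ (1 - t) * (1 + t / (1 - q0)) := by
    rw [← sub_nonneg]
    have : (1 - t) * (1 + t / (1 - q0)) - 1 = t * (q0 - t) / (1 - q0) := by
      field_simp; ring
    rw [this]
    have h5 : 0 ≤ q0 - t := by linarith
    positivity
  have h4 : (0:ℝ) < Real.exp (t / (1 - q0)) := Real.exp_pos _
  rw [Real.exp_neg, inv_le_iff_one_le_mul₀ h4]
  have h6 : 0 ≤ 1 - t := by linarith
  nlinarith

private lemma qPoch_q_abs_ge {q : ℂ} (hq : ‖q‖ < 1) (k : ℕ) :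
    Real.exp (-(‖q‖ / (1 - ‖q‖) ^ 2)) ≤ ‖qPoch q q k‖ := by
  set K := ‖q‖ with hK
  have hK0 : 0 ≤ K := norm_nonneg q
  have h1K : (0:ℝ) < 1 - K := by linarith
  rw [qPoch, norm_prod]
  have step1 : ∀ j : ℕ, Real.exp (-(K ^ (j+1) / (1 - K))) ≤ ‖1 - q * q ^ j‖ := by
    intro j
    have ht : K ^ (j+1) ≤ K := by
      calc K ^ (j+1) = K * K ^ j := by ring
        _ ≤ K * 1 := mul_le_mul_of_nonneg_left (pow_le_one₀ hK0 hq.le) hK0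
        _ = K := mul_one K
    have h2 := exp_le_one_sub (pow_nonneg hK0 (j+1)) ht hq
    have h3 : 1 - K ^ (j+1) ≤ ‖1 - q * q ^ j‖ := by
      have := norm_sub_norm_le (1 : ℂ) (q * q ^ j)
      simp only [norm_one, norm_mul, norm_pow] at this
      calc 1 - K ^ (j+1) = 1 - K * K ^ j := by ring
        _ ≤ ‖1 - q * q ^ j‖ := this
    linarith
  calc Real.exp (-(K / (1 - K) ^ 2))
      ≤ Real.exp (∑ j ∈ Finset.range k, -(K ^ (j+1) / (1 - K))) := by
        apply Real.exp_le_exp.2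
        rw [Finset.sum_neg_distrib, neg_le_neg_iff]
        calc ∑ j ∈ Finset.range k, K ^ (j+1) / (1 - K)
            = (∑ j ∈ Finset.range k, K ^ j) * (K / (1 - K)) := by
              rw [Finset.sum_mul]; congr 1; ext j; rw [pow_succ]; ring
          _ ≤ (1 - K)⁻¹ * (K / (1 - K)) := by
              apply mul_le_mul_of_nonneg_right (geom_partial_le hK0 hq k)
              positivity
          _ = K / (1 - K) ^ 2 := by rw [pow_two]; rw [eq_div_iff (by positivity)]; field_simp
    _ = ∏ j ∈ Finset.range k, Real.exp (-(K ^ (j+1) / (1 - K))) := Real.exp_sum _ _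
    _ ≤ ∏ j ∈ Finset.range k, ‖1 - q * q ^ j‖ := by
        apply Finset.prod_le_prod (fun j _ => (Real.exp_pos _).le) (fun j _ => step1 j)

private lemma qPoch_q_ne_zero {q : ℂ} (hq : ‖q‖ < 1) (k : ℕ) :
    qPoch q q k ≠ 0 := by
  intro h
  have := qPoch_q_abs_ge hq k
  rw [h, norm_zero] at this
  exact absurd this (not_le.2 (Real.exp_pos _))

private lemma log_summable {w q : ℂ} (hq : ‖q‖ < 1) :
    Summable fun j : ℕ => Complex.log (1 - w * q ^ j) := by
  apply Summable.of_norm_bounded_eventually_nat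
    (g := fun j => 3/2 * (‖w‖ * ‖q‖ ^ j))
  · exact (summable_geometric_of_lt_one (norm_nonneg q) hq).mul_left _ |>.mul_left _
  · have hT : Tendsto (fun j : ℕ => ‖w‖ * ‖q‖ ^ j) atTop (𝓝 0) := by
      simpa using (tendsto_pow_atTop_nhds_zero_of_lt_one (norm_nonneg q) hq).const_mul
        (‖w‖)
    filter_upwards [hT.eventually (eventually_le_nhds one_half_pos)] with j hj
    have h1 : ‖-(w * q ^ j)‖ ≤ 1/2 := by
      simpa [norm_mul, norm_pow] using hj
    have := Complex.norm_log_one_add_half_le_self h1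
    simp only [norm_neg, norm_mul, norm_pow] at this ⊢
    calc ‖Complex.log (1 - w * q ^ j)‖
        = ‖Complex.log (1 + -(w * q ^ j))‖ := by ring_nf
      _ ≤ 3/2 * (‖w‖ * ‖q‖ ^ j) := by
          simpa [norm_mul, norm_pow, mul_assoc] using this

private lemma hasProd_zero_of_zero {f : ℕ → ℂ} (i0 : ℕ) (h : f i0 = 0) : HasProd f 0 := by
  have hev : ∀ᶠ s in (atTop : Filter (Finset ℕ)), ∏ i ∈ s, f i = 0 := by
    filter_upwards [Filter.eventually_ge_atTop ({i0} : Finset ℕ)] with s hs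
    exact Finset.prod_eq_zero (hs (Finset.mem_singleton_self i0)) h
  exact Tendsto.congr' (Filter.EventuallyEq.symm hev) tendsto_const_nhds

private lemma hasProd_qPochInf {w q : ℂ} (hq : ‖q‖ < 1) :
    HasProd (fun j : ℕ => 1 - w * q ^ j) (qPochInf w q) := by
  by_cases h : ∀ j : ℕ, 1 - w * q ^ j ≠ 0
  · exact (Complex.multipliable_of_summable_log (log_summable hq)).hasProd
  · push_neg at h
    obtain ⟨j0, h0⟩ := h
    have H : HasProd (fun j : ℕ => 1 - w * q ^ j) 0 := hasProd_zero_of_zero j0 h0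
    rw [qPochInf, H.tprod_eq]
    exact H

private lemma qPochInf_ne_zero {w q : ℂ} (hw : ‖w‖ < 1) (hq : ‖q‖ < 1) :
    qPochInf w q ≠ 0 := by
  have hne : ∀ j : ℕ, 1 - w * q ^ j ≠ 0 := by
    intro j hcon
    have habs : ‖w * q ^ j‖ < 1 := by
      rw [norm_mul, norm_pow]
      calc ‖w‖ * ‖q‖ ^ j ≤ ‖w‖ * 1 := by
            apply mul_le_mul_of_nonneg_left _ (norm_nonneg w)
            exact pow_le_one₀ (norm_nonneg q) hq.le
        _ < 1 := by simpa using hw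
    have h1 : w * q ^ j = 1 := by linear_combination -hcon
    rw [h1] at habs; simp at habs
  have := Complex.cexp_tsum_eq_tprod (f := fun j => 1 - w * q ^ j) hne (log_summable hq)
  rw [qPochInf, ← this]
  exact Complex.exp_ne_zero _

/-- The coefficients of the q-binomial series. -/
private noncomputable def qC (a q : ℂ) (k : ℕ) : ℂ := qPoch a q k / qPoch q q k

/-- The q-binomial series. -/
private noncomputable def qS (a q w : ℂ) : ℂ := ∑' k : ℕ, qC a q k * w ^ k

private noncomputable def qM (a q : ℂ) : ℝ :=
  Real.exp (‖a‖ / (1 - ‖q‖)) *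
    Real.exp (‖q‖ / (1 - ‖q‖) ^ 2)

private lemma qM_pos (a q : ℂ) : 0 < qM a q := by
  unfold qM; positivity

private lemma qC_bound {a q : ℂ} (hq : ‖q‖ < 1) (k : ℕ) :
    ‖qC a q k‖ ≤ qM a q := by
  rw [qC, norm_div, qM]
  have h1 := qPoch_abs_le (a := a) hq k
  have h2 := qPoch_q_abs_ge hq k
  have h3 : (0:ℝ) < Real.exp (-(‖q‖ / (1 - ‖q‖) ^ 2)) := Real.exp_pos _
  calc ‖qPoch a q k‖ / ‖qPoch q q k‖
      ≤ Real.exp (‖a‖ / (1 - ‖q‖)) /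
          Real.exp (-(‖q‖ / (1 - ‖q‖) ^ 2)) :=
        div_le_div₀ (Real.exp_pos _).le h1 h3 h2
    _ = _ := by rw [div_eq_mul_inv, Real.exp_neg, inv_inv]

private lemma qC_summable {a q : ℂ} (hq : ‖q‖ < 1) {w : ℂ}
    (hw : ‖w‖ < 1) : Summable fun k : ℕ => qC a q k * w ^ k := by
  apply Summable.of_norm_bounded (g := fun k => qM a q * ‖w‖ ^ k)
  · exact (summable_geometric_of_lt_one (norm_nonneg w) hw).mul_left _
  · intro k
    rw [norm_mul, norm_pow]
    exact mul_le_mul_of_nonneg_right (qC_bound hq k) (by positivity)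

private lemma qC_zero (a q : ℂ) : qC a q 0 = 1 := by
  simp [qC, qPoch]

private lemma qC_rec {a q : ℂ} (hq : ‖q‖ < 1) (k : ℕ) :
    qC a q (k+1) * (1 - q ^ (k+1)) = qC a q k * (1 - a * q ^ k) := by
  have hfac : (1 : ℂ) - q * q ^ k ≠ 0 := by
    have h := qPoch_q_ne_zero hq (k+1)
    rw [qPoch, Finset.prod_range_succ] at h
    exact right_ne_zero_of_mul h
  have h1 : qPoch a q (k+1) = qPoch a q k * (1 - a * q ^ k) := Finset.prod_range_succ _ _
  have h2 : qPoch q q (k+1) = qPoch q q k * (1 - q * q ^ k) := Finset.prod_range_succ _ _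
  have h3 : qPoch q q k ≠ 0 := qPoch_q_ne_zero hq k
  rw [qC, qC, h1, h2]
  have h4 : (1 : ℂ) - q ^ (k+1) = 1 - q * q ^ k := by rw [pow_succ]; ring
  rw [h4]
  rw [div_mul_eq_mul_div, mul_div_mul_right _ _ hfac]
  ring

private lemma qS_eq {a q : ℂ} (hq : ‖q‖ < 1) {w : ℂ} (hw : ‖w‖ < 1) :
    qS a q w = 1 + ∑' k : ℕ, qC a q (k+1) * w ^ (k+1) := by
  rw [qS, (qC_summable hq hw).tsum_eq_zero_add]
  simp [qC_zero]

private lemma qS_fe {a q : ℂ} (hq : ‖q‖ < 1) {w : ℂ} (hw : ‖w‖ < 1) :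
    (1 - w) * qS a q w = (1 - a * w) * qS a q (q * w) := by
  have hqw : ‖q * w‖ < 1 := by
    rw [norm_mul]
    calc ‖q‖ * ‖w‖ ≤ 1 * ‖w‖ :=
          mul_le_mul_of_nonneg_right hq.le (norm_nonneg w)
      _ < 1 := by simpa using hw
  have hS : Summable fun k : ℕ => qC a q k * w ^ k := qC_summable hq hw
  have hS1 : Summable fun k : ℕ => qC a q (k+1) * w ^ (k+1) :=
    (summable_nat_add_iff (f := fun k : ℕ => qC a q k * w ^ k) 1).2 hS
  have hSq : Summable fun k : ℕ => qC a q k * (q * w) ^ k := qC_summable hq hqw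
  have hSq1 : Summable fun k : ℕ => qC a q (k+1) * (q * w) ^ (k+1) :=
    (summable_nat_add_iff (f := fun k : ℕ => qC a q k * (q * w) ^ k) 1).2 hSq
  have hS2 : Summable fun k : ℕ => qC a q k * w ^ (k+1) :=
    (hS.mul_right w).congr (fun k => by ring)
  have hS3 : Summable fun k : ℕ => a * (qC a q k * q ^ k * w ^ (k+1)) :=
    ((hSq.mul_right w).mul_left a).congr (fun k => by ring)
  have e1 : (1 - w) * qS a q w
      = 1 + ∑' k : ℕ, (qC a q (k+1) * w ^ (k+1) - qC a q k * w ^ (k+1)) := by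
    have ew : w * qS a q w = ∑' k : ℕ, qC a q k * w ^ (k+1) := by
      rw [qS, ← tsum_mul_left]
      exact tsum_congr fun k => by ring
    rw [sub_mul, one_mul, ew, qS_eq hq hw, hS1.tsum_sub hS2]
    ring
  have e2 : (1 - a * w) * qS a q (q * w)
      = 1 + ∑' k : ℕ, (qC a q (k+1) * (q * w) ^ (k+1) - a * (qC a q k * q ^ k * w ^ (k+1))) := by
    have ew : (a * w) * qS a q (q * w) = ∑' k : ℕ, a * (qC a q k * q ^ k * w ^ (k+1)) := by
      rw [qS, ← tsum_mul_left]
      exact tsum_congr fun k => by ring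
    rw [sub_mul, one_mul, ew, qS_eq hq hqw, hSq1.tsum_sub hS3]
    ring
  rw [e1, e2]
  congr 1
  apply tsum_congr
  intro k
  linear_combination w ^ (k+1) * qC_rec (a := a) hq k

private lemma qS_sub_one_bound {a q : ℂ} (hq : ‖q‖ < 1) {w : ℂ}
    (hw : ‖w‖ < 1) :
    ‖qS a q w - 1‖ ≤ qM a q * ‖w‖ / (1 - ‖w‖) := by
  have hS1 : Summable fun k : ℕ => qC a q (k+1) * w ^ (k+1) :=
    (summable_nat_add_iff (f := fun k : ℕ => qC a q k * w ^ k) 1).2 (qC_summable hq hw)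
  have hg : Summable fun k : ℕ => qM a q * ‖w‖ * ‖w‖ ^ k :=
    (summable_geometric_of_lt_one (norm_nonneg w) hw).mul_left _
  have hnorm : Summable fun k : ℕ => ‖qC a q (k+1) * w ^ (k+1)‖ := by
    apply Summable.of_nonneg_of_le (fun k => norm_nonneg _) _ hg
    intro k
    rw [norm_mul, norm_pow]
    calc ‖qC a q (k+1)‖ * ‖w‖ ^ (k+1)
        ≤ qM a q * ‖w‖ ^ (k+1) :=
          mul_le_mul_of_nonneg_right (qC_bound hq _) (by positivity)
      _ = qM a q * ‖w‖ * ‖w‖ ^ k := by ring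
  rw [qS_eq hq hw, add_sub_cancel_left]
  calc ‖∑' k : ℕ, qC a q (k+1) * w ^ (k+1)‖
      ≤ ∑' k : ℕ, ‖qC a q (k+1) * w ^ (k+1)‖ := norm_tsum_le_tsum_norm hnorm
    _ ≤ ∑' k : ℕ, qM a q * ‖w‖ * ‖w‖ ^ k := by
        apply Summable.tsum_le_tsum _ hnorm hg
        intro k
        rw [norm_mul, norm_pow]
        calc ‖qC a q (k+1)‖ * ‖w‖ ^ (k+1)
            ≤ qM a q * ‖w‖ ^ (k+1) :=
              mul_le_mul_of_nonneg_right (qC_bound hq _) (by positivity)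
          _ = qM a q * ‖w‖ * ‖w‖ ^ k := by ring
    _ = qM a q * ‖w‖ * (1 - ‖w‖)⁻¹ := by
        rw [tsum_mul_left, tsum_geometric_of_lt_one (norm_nonneg w) hw]
    _ = qM a q * ‖w‖ / (1 - ‖w‖) := by rw [div_eq_mul_inv]

/-- The q-binomial theorem. -/
theorem q_binomial_theorem (q a z : ℂ) (hq : ‖q‖ < 1) (hz : ‖z‖ < 1) :
    ∑' k : ℕ, qPoch a q k / qPoch q q k * z ^ k = qPochInf (a * z) q / qPochInf z q := by
  have hK0 : 0 ≤ ‖q‖ := norm_nonneg q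
  have hz0 : 0 ≤ ‖z‖ := norm_nonneg z
  have habs : ∀ n : ℕ, ‖q ^ n * z‖ < 1 := by
    intro n
    rw [norm_mul, norm_pow]
    calc ‖q‖ ^ n * ‖z‖ ≤ 1 * ‖z‖ :=
          mul_le_mul_of_nonneg_right (pow_le_one₀ hK0 hq.le) hz0
      _ < 1 := by simpa using hz
  -- the iterated functional equation
  have hiter : ∀ n : ℕ, qS a q z * ∏ j ∈ Finset.range n, (1 - z * q ^ j)
      = (∏ j ∈ Finset.range n, (1 - a * z * q ^ j)) * qS a q (q ^ n * z) := by
    intro n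
    induction n with
    | zero => simp
    | succ n ih =>
      have hfe := qS_fe (a := a) hq (habs n)
      have harg : q * (q ^ n * z) = q ^ (n+1) * z := by ring
      rw [harg] at hfe
      rw [Finset.prod_range_succ, Finset.prod_range_succ, ← mul_assoc]
      calc qS a q z * (∏ j ∈ Finset.range n, (1 - z * q ^ j)) * (1 - z * q ^ n)
          = (∏ j ∈ Finset.range n, (1 - a * z * q ^ j)) *
              ((1 - q ^ n * z) * qS a q (q ^ n * z)) := by rw [← mul_assoc, ih]; ring
        _ = (∏ j ∈ Finset.range n, (1 - a * z * q ^ j)) *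
              ((1 - a * (q ^ n * z)) * qS a q (q ^ (n+1) * z)) := by rw [hfe]
        _ = _ := by ring
  -- limits
  have P1 : Tendsto (fun n => ∏ j ∈ Finset.range n, (1 - z * q ^ j)) atTop
      (𝓝 (qPochInf z q)) := (hasProd_qPochInf hq).tendsto_prod_nat
  have P2 : Tendsto (fun n => ∏ j ∈ Finset.range n, (1 - a * z * q ^ j)) atTop
      (𝓝 (qPochInf (a * z) q)) := (hasProd_qPochInf hq).tendsto_prod_nat
  have P3 : Tendsto (fun n => qS a q (q ^ n * z)) atTop (𝓝 1) := by
    rw [← tendsto_sub_nhds_zero_iff]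
    apply squeeze_zero_norm (a := fun n => qM a q * ‖z‖ / (1 - ‖z‖)
      * ‖q‖ ^ n)
    · intro n
      have h1 := qS_sub_one_bound (a := a) hq (habs n)
      have h2 : ‖q ^ n * z‖ = ‖q‖ ^ n * ‖z‖ := by
        rw [norm_mul, norm_pow]
      have h3 : ‖q‖ ^ n * ‖z‖ ≤ ‖z‖ :=
        mul_le_of_le_one_left hz0 (pow_le_one₀ hK0 hq.le)
      calc ‖qS a q (q ^ n * z) - 1‖
          ≤ qM a q * ‖q ^ n * z‖ / (1 - ‖q ^ n * z‖) := h1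
        _ ≤ qM a q * (‖q‖ ^ n * ‖z‖) / (1 - ‖z‖) := by
            rw [h2]
            exact div_le_div₀ (mul_nonneg (qM_pos a q).le (by positivity)) le_rfl (by linarith) (by linarith)
        _ = qM a q * ‖z‖ / (1 - ‖z‖) * ‖q‖ ^ n := by ring
    · simpa using (tendsto_pow_atTop_nhds_zero_of_lt_one hK0 hq).const_mul
        (qM a q * ‖z‖ / (1 - ‖z‖))
  have L1 : Tendsto (fun n => qS a q z * ∏ j ∈ Finset.range n, (1 - z * q ^ j)) atTop
      (𝓝 (qS a q z * qPochInf z q)) := P1.const_mul _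
  have L2 : Tendsto (fun n => (∏ j ∈ Finset.range n, (1 - a * z * q ^ j))
      * qS a q (q ^ n * z)) atTop (𝓝 (qPochInf (a * z) q * 1)) := P2.mul P3
  have key : qS a q z * qPochInf z q = qPochInf (a * z) q * 1 :=
    tendsto_nhds_unique (L1.congr fun n => hiter n) L2
  have hPz : qPochInf z q ≠ 0 := qPochInf_ne_zero hz hq
  have hgoal : (∑' k : ℕ, qPoch a q k / qPoch q q k * z ^ k) = qS a q z := rfl
  rw [hgoal, eq_div_iff hPz]
  simpa using key
end

section
/- (q-Chu–Vandermonde summation formula) Let q, b, c be complex numbers with q ≠ 0, q not a root of unity, b ≠ 0, and c ≠ q^{-j} for every integer j with 0 ≤ j < n, where n is a nonnegative integer. Then ∑_{k=0}^n [(q^{-n};q)_k (b;q)_k / ((q;q)_k (c;q)_k)] q^k = (c/b;q)_n b^n / (c;q)_n. -/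
namespace QCV

/-- Triangular numbers: `tri k = 0 + 1 + ... + (k-1)`. -/
def tri : ℕ → ℕ
  | 0 => 0
  | k + 1 => tri k + k

/-- Gaussian binomial coefficients, defined via the Pascal-type recurrence. -/
noncomputable def G (q : ℂ) : ℕ → ℕ → ℂ
  | 0, 0 => 1
  | 0, _ + 1 => 0
  | _ + 1, 0 => 1
  | n + 1, k + 1 => G q n (k + 1) + q ^ (n - k) * G q n k

lemma G_zero (q : ℂ) (n : ℕ) : G q n 0 = 1 := by cases n <;> rfl

lemma G_succ (q : ℂ) (n k : ℕ) :
    G q (n + 1) (k + 1) = G q n (k + 1) + q ^ (n - k) * G q n k := rfl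

lemma G_eq_zero (q : ℂ) : ∀ n k, n < k → G q n k = 0
  | 0, _ + 1, _ => rfl
  | n + 1, k + 1, h => by
    rw [G_succ, G_eq_zero q n (k + 1) (by omega), G_eq_zero q n k (by omega)]
    ring

lemma qPoch_zero (a q : ℂ) : qPoch a q 0 = 1 := by simp [qPoch]

lemma qPoch_succ (a q : ℂ) (k : ℕ) :
    qPoch a q (k + 1) = qPoch a q k * (1 - a * q ^ k) := by
  simp [qPoch, Finset.prod_range_succ]

lemma qPoch_succ' (a q : ℂ) (k : ℕ) :
    qPoch a q (k + 1) = (1 - a) * qPoch (a * q) q k := by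
  rw [qPoch, Finset.prod_range_succ']
  simp only [pow_zero, mul_one]
  rw [mul_comm]
  congr 1
  apply Finset.prod_congr rfl
  intro j _
  ring_nf

lemma qPoch_add (a q : ℂ) (m : ℕ) : ∀ l, qPoch a q (m + l) = qPoch a q m * qPoch (a * q ^ m) q l
  | 0 => by simp [qPoch_zero]
  | l + 1 => by
    rw [show m + (l + 1) = (m + l) + 1 from rfl, qPoch_succ, qPoch_add a q m l, qPoch_succ,
      pow_add]
    ring

/-- The fundamental ratio identity for Gaussian binomials:
`[n choose k+1] (1 - q^(k+1)) = [n choose k] (1 - q^(n-k))`. -/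
lemma G_ratio (q : ℂ) : ∀ n k, G q n (k + 1) * (1 - q ^ (k + 1)) = G q n k * (1 - q ^ (n - k))
  | 0, k => by
    rw [G_eq_zero q 0 (k + 1) (by omega), Nat.zero_sub]
    simp
  | n + 1, 0 => by
    rw [G_succ, G_zero, add_mul, G_ratio q n 0, G_zero, G_zero]
    simp only [Nat.sub_zero, Nat.add_sub_cancel, pow_succ]
    ring
  | n + 1, k + 1 => by
    rcases Nat.lt_or_ge n (k + 1) with h | h
    · rw [G_eq_zero q (n + 1) (k + 1 + 1) (by omega)]
      rcases Nat.lt_or_ge (n + 1) (k + 1) with h' | h'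
      · rw [G_eq_zero q (n + 1) (k + 1) h']; ring
      · rw [show n + 1 - (k + 1) = 0 from by omega]; simp
    · have h2 : n + 1 - (k + 1) = n - k := by omega
      have e1 : q ^ (n - (k + 1)) * q ^ (k + 1 + 1) = q ^ (n + 1) := by
        rw [← pow_add]; congr 1; omega
      have e2 : q ^ (n - k) * q ^ (k + 1) = q ^ (n + 1) := by
        rw [← pow_add]; congr 1; omega
      rw [G_succ, G_succ, h2]
      linear_combination G_ratio q n (k + 1) + q ^ (n - k) * G_ratio q n k
        - G q n (k + 1) * e1 + G q n (k + 1) * e2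

/-- Expression of `(q^(-n); q)_k` in terms of Gaussian binomials, for `k ≤ n`. -/
lemma L2 (q : ℂ) (hq0 : q ≠ 0) (n : ℕ) :
    ∀ k, k ≤ n → qPoch (q ^ (-(n : ℤ))) q k
      = G q n k * qPoch q q k * (-1) ^ k * q ^ tri k * (q⁻¹) ^ (n * k)
  | 0, _ => by simp [qPoch_zero, G_zero, tri]
  | k + 1, hk => by
    have hv : q * q⁻¹ = 1 := mul_inv_cancel₀ hq0
    have ha : (q : ℂ) ^ (-(n : ℤ)) = (q⁻¹) ^ n := by
      rw [zpow_neg, zpow_natCast, inv_pow]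
    have e3 : q ^ (n - k) * q ^ k = q ^ n := by rw [← pow_add]; congr 1; omega
    have e4 : q ^ n * (q⁻¹) ^ n = 1 := by rw [← mul_pow, hv, one_pow]
    have r := G_ratio q n k
    rw [qPoch_succ, L2 q hq0 n k (by omega), qPoch_succ q q k, ha,
      show tri (k + 1) = tri k + k from rfl, pow_add, show n * (k + 1) = n * k + n from by ring,
      pow_add]
    linear_combination (qPoch q q k * (-1 : ℂ) ^ k * q ^ tri k * q ^ k * (q⁻¹) ^ (n * k) * (q⁻¹) ^ n) * r
      - (G q n k * qPoch q q k * (-1 : ℂ) ^ k * q ^ tri k * (q⁻¹) ^ (n * k)) * e4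
      - (G q n k * qPoch q q k * (-1 : ℂ) ^ k * q ^ tri k * (q⁻¹) ^ (n * k) * (q⁻¹) ^ n) * e3

/-- The per-term identity used in the induction step of `keyP`. -/
lemma keyP_term (q b c : ℂ) (hq0 : q ≠ 0) (n k : ℕ) (hk : k ≤ n) :
    G q n k * qPoch b q k * qPoch (c * q ^ k) q (n + 1 - k) * (-1) ^ k * q ^ tri (k + 1)
        * (q⁻¹) ^ ((n + 1) * k)
      + q ^ (n - k) * G q n k * qPoch b q (k + 1) * qPoch (c * q ^ (k + 1)) q (n - k)
        * (-1) ^ (k + 1) * q ^ tri (k + 2) * (q⁻¹) ^ ((n + 1) * (k + 1))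
    = (b - c) * (G q n k * qPoch b q k * qPoch ((c * q) * q ^ k) q (n - k) * (-1) ^ k
        * q ^ tri (k + 1) * (q⁻¹) ^ (n * k)) := by
  have E1 : q ^ (n - k) * q ^ k * q * (q⁻¹) ^ (n + 1) = 1 := by
    have h : q ^ (n - k) * q ^ k * q = q ^ (n + 1) := by
      rw [← pow_add, ← pow_succ]; congr 1; omega
    rw [h, ← mul_pow, mul_inv_cancel₀ hq0, one_pow]
  have E2 : q ^ k * (q⁻¹) ^ k = 1 := by
    rw [← mul_pow, mul_inv_cancel₀ hq0, one_pow]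
  rw [show n + 1 - k = (n - k) + 1 from by omega, qPoch_succ' (c * q ^ k) q (n - k),
    show c * q ^ k * q = c * q ^ (k + 1) from by ring,
    show (c * q) * q ^ k = c * q ^ (k + 1) from by ring,
    qPoch_succ b q k,
    show tri (k + 2) = tri (k + 1) + (k + 1) from rfl]
  linear_combination
    (G q n k * qPoch b q k * qPoch (c * q ^ (k + 1)) q (n - k) * (-1 : ℂ) ^ k
      * q ^ tri (k + 1) * (q⁻¹) ^ (n * k) * (b - c)) * E2
    - (G q n k * qPoch b q k * qPoch (c * q ^ (k + 1)) q (n - k) * (-1 : ℂ) ^ k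
      * q ^ tri (k + 1) * (q⁻¹) ^ (n * k) * (1 - b * q ^ k) * (q⁻¹) ^ k) * E1

/-- The key polynomial form of the q-Chu–Vandermonde sum. -/
lemma keyP (q b : ℂ) (hq0 : q ≠ 0) : ∀ (n : ℕ) (c : ℂ),
    ∑ k ∈ Finset.range (n + 1), G q n k * qPoch b q k * qPoch (c * q ^ k) q (n - k)
      * (-1) ^ k * q ^ tri (k + 1) * (q⁻¹) ^ (n * k)
    = ∏ j ∈ Finset.range n, (b - c * q ^ j)
  | 0, c => by
    simp [G_zero, qPoch_zero, tri]
  | n + 1, c => by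
    have A1 := Finset.sum_range_succ'
      (fun k => G q (n + 1) k * qPoch b q k * qPoch (c * q ^ k) q (n + 1 - k)
        * (-1) ^ k * q ^ tri (k + 1) * (q⁻¹) ^ ((n + 1) * k)) (n + 1)
    have A2 := Finset.sum_range_succ'
      (fun k => G q n k * qPoch b q k * qPoch (c * q ^ k) q (n + 1 - k)
        * (-1) ^ k * q ^ tri (k + 1) * (q⁻¹) ^ ((n + 1) * k)) (n + 1)
    have A3 : ∑ k ∈ Finset.range (n + 1 + 1),
        G q n k * qPoch b q k * qPoch (c * q ^ k) q (n + 1 - k)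
          * (-1) ^ k * q ^ tri (k + 1) * (q⁻¹) ^ ((n + 1) * k)
        = ∑ k ∈ Finset.range (n + 1),
        G q n k * qPoch b q k * qPoch (c * q ^ k) q (n + 1 - k)
          * (-1) ^ k * q ^ tri (k + 1) * (q⁻¹) ^ ((n + 1) * k) := by
      rw [Finset.sum_range_succ, G_eq_zero q n (n + 1) (Nat.lt_succ_self n)]
      ring
    have hsplit : ∀ k ∈ Finset.range (n + 1),
        G q (n + 1) (k + 1) * qPoch b q (k + 1) * qPoch (c * q ^ (k + 1)) q (n + 1 - (k + 1))
          * (-1) ^ (k + 1) * q ^ tri (k + 1 + 1) * (q⁻¹) ^ ((n + 1) * (k + 1))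
        = (G q n (k + 1) * qPoch b q (k + 1) * qPoch (c * q ^ (k + 1)) q (n + 1 - (k + 1))
            * (-1) ^ (k + 1) * q ^ tri (k + 1 + 1) * (q⁻¹) ^ ((n + 1) * (k + 1)))
          + (q ^ (n - k) * G q n k * qPoch b q (k + 1) * qPoch (c * q ^ (k + 1)) q (n - k)
            * (-1) ^ (k + 1) * q ^ tri (k + 2) * (q⁻¹) ^ ((n + 1) * (k + 1))) := by
      intro k hk
      rw [G_succ, show n + 1 - (k + 1) = n - k from by omega]
      ring
    rw [A1, Finset.sum_congr rfl hsplit, Finset.sum_add_distrib,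
      show G q (n + 1) 0 = G q n 0 from by rw [G_zero, G_zero], add_right_comm, ← A2, A3,
      ← Finset.sum_add_distrib]
    have hterm : ∀ k ∈ Finset.range (n + 1),
        (G q n k * qPoch b q k * qPoch (c * q ^ k) q (n + 1 - k) * (-1) ^ k * q ^ tri (k + 1)
          * (q⁻¹) ^ ((n + 1) * k))
        + (q ^ (n - k) * G q n k * qPoch b q (k + 1) * qPoch (c * q ^ (k + 1)) q (n - k)
          * (-1) ^ (k + 1) * q ^ tri (k + 2) * (q⁻¹) ^ ((n + 1) * (k + 1)))
        = (b - c) * (G q n k * qPoch b q k * qPoch ((c * q) * q ^ k) q (n - k) * (-1) ^ k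
          * q ^ tri (k + 1) * (q⁻¹) ^ (n * k)) := by
      intro k hk
      exact keyP_term q b c hq0 n k (by simpa using Nat.lt_succ_iff.mp (Finset.mem_range.mp hk))
    rw [Finset.sum_congr rfl hterm, ← Finset.mul_sum, keyP q b hq0 n (c * q),
      Finset.prod_range_succ']
    rw [show (b - c * q ^ 0) = b - c from by rw [pow_zero, mul_one]]
    have hp : ∏ j ∈ Finset.range n, (b - (c * q) * q ^ j)
        = ∏ j ∈ Finset.range n, (b - c * q ^ (j + 1)) := by
      apply Finset.prod_congr rfl
      intro j _
      rw [pow_succ]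
      ring
    rw [hp]
    ring

end QCV

open QCV in
/-- The q-Chu–Vandermonde summation formula. -/
theorem q_chu_vandermonde (n : ℕ) (q b c : ℂ) (hq0 : q ≠ 0)
    (hq1 : ∀ m : ℕ, 0 < m → q ^ m ≠ 1) (hb : b ≠ 0)
    (hc : ∀ j : ℕ, j < n → c ≠ q ^ (-(j : ℤ))) :
    ∑ k ∈ Finset.range (n + 1),
      qPoch (q ^ (-(n : ℤ))) q k * qPoch b q k / (qPoch q q k * qPoch c q k) * q ^ k
    = qPoch (c / b) q n * b ^ n / qPoch c q n := by
  have hfac : ∀ j, j < n → (1 - c * q ^ j) ≠ 0 := by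
    intro j hj h
    apply hc j hj
    have : c * q ^ j = 1 := by linear_combination -h
    rw [zpow_neg, zpow_natCast]
    field_simp
    exact this
  have hqq : ∀ k : ℕ, qPoch q q k ≠ 0 := by
    intro k
    rw [qPoch, Finset.prod_ne_zero_iff]
    intro j _
    intro h
    exact hq1 (j + 1) (Nat.succ_pos j) (by rw [pow_succ']; linear_combination -h)
  have hck : ∀ k, k ≤ n → qPoch c q k ≠ 0 := by
    intro k hk
    rw [qPoch, Finset.prod_ne_zero_iff]
    intro j hj
    exact hfac j (by have := Finset.mem_range.mp hj; omega)
  have hQ : ∀ k, k ≤ n → qPoch (c * q ^ k) q (n - k) ≠ 0 := by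
    intro k hk
    rw [qPoch, Finset.prod_ne_zero_iff]
    intro j hj
    have : c * q ^ k * q ^ j = c * q ^ (k + j) := by rw [pow_add]; ring
    rw [this]
    exact hfac (k + j) (by have := Finset.mem_range.mp hj; omega)
  have hsplitc : ∀ k, k ≤ n → qPoch c q n = qPoch c q k * qPoch (c * q ^ k) q (n - k) := by
    intro k hk
    rw [← qPoch_add]
    congr 1
    omega
  have hTk : ∀ k ∈ Finset.range (n + 1),
      qPoch (q ^ (-(n : ℤ))) q k * qPoch b q k / (qPoch q q k * qPoch c q k) * q ^ k
      = (G q n k * qPoch b q k * qPoch (c * q ^ k) q (n - k) * (-1) ^ k * q ^ tri (k + 1)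
          * (q⁻¹) ^ (n * k)) / qPoch c q n := by
    intro k hk
    have hkn : k ≤ n := by have := Finset.mem_range.mp hk; omega
    rw [L2 q hq0 n k hkn, hsplitc k hkn,
      show tri (k + 1) = tri k + k from rfl, pow_add]
    have h1 := hqq k
    have h2 := hck k hkn
    have h3 := hQ k hkn
    have h3' : qPoch (q ^ k * c) q (n - k) ≠ 0 := by rw [mul_comm]; exact h3
    field_simp
  rw [Finset.sum_congr rfl hTk, ← Finset.sum_div, keyP q b hq0 n c]
  have hprod : qPoch (c / b) q n * b ^ n = ∏ j ∈ Finset.range n, (b - c * q ^ j) := by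
    rw [qPoch, show (b : ℂ) ^ n = ∏ _j ∈ Finset.range n, b from by
        rw [Finset.prod_const, Finset.card_range], ← Finset.prod_mul_distrib]
    apply Finset.prod_congr rfl
    intro j _
    field_simp
  rw [hprod]
end

section
/- (4W3 contiguous relation) Let q, a, b, z be complex numbers with |q| < 1, |z| < 1, a ≠ 1, b ≠ 0, and aq/b ≠ q^{-j} for every nonnegative integer j. Then ∑_{k=0}^∞ [(1 - a q^{2k})/(1 - a)] · [(a;q)_k (b;q)_k / ((q;q)_k (aq/b;q)_k)] z^k = (1 - bz) · ∑_{k=0}^∞ [(aq;q)_k (bq;q)_k / ((q;q)_k (aq/b;q)_k)] z^k. -/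
open Filter

lemma qPoch_succ (a q : ℂ) (k : ℕ) :
    qPoch a q (k + 1) = qPoch a q k * (1 - a * q ^ k) := Finset.prod_range_succ _ _

lemma qPoch_succ' (a q : ℂ) (k : ℕ) :
    qPoch a q (k + 1) = (1 - a) * qPoch (a * q) q k := by
  rw [qPoch, Finset.prod_range_succ', pow_zero, mul_one, mul_comm]
  congr 1
  · exact Finset.prod_congr rfl fun j _ => by ring

lemma alg_key (a b q z A B C D t Z u : ℂ) (ha : (1:ℂ) - a ≠ 0)
    (hC : C ≠ 0) (hD : D ≠ 0) (h3 : (1:ℂ) - q * t ≠ 0) (h4 : (1:ℂ) - u * t ≠ 0) :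
    (1 - b * u * (q * t ^ 2)) / (1 - a) *
      ((1 - a) * A * ((1 - b) * B) / (C * (1 - q * t) * (D * (1 - u * t)))) * (Z * z)
    = A * (1 - b * u * t) * (B * (1 - b * q * t)) /
        (C * (1 - q * t) * (D * (1 - u * t))) * (Z * z)
      - b * z * (A * B / (C * D) * Z) := by
  field_simp
  ring

/-- The ₄W₃ contiguous relation: `₄W₃(a; b; q, z) = (1 - bz) ₂φ₁(aq, bq; aq/b; q, z)`. -/
theorem fourW3_contiguous_relation (q a b z : ℂ) (hq : ‖q‖ < 1)
    (hz : ‖z‖ < 1) (ha : a ≠ 1) (hb : b ≠ 0)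
    (hab : ∀ j : ℕ, a * q / b ≠ q ^ (-(j : ℤ))) :
    ∑' k : ℕ, (1 - a * q ^ (2 * k)) / (1 - a) *
        (qPoch a q k * qPoch b q k / (qPoch q q k * qPoch (a * q / b) q k)) * z ^ k
    = (1 - b * z) *
        ∑' k : ℕ, qPoch (a * q) q k * qPoch (b * q) q k /
          (qPoch q q k * qPoch (a * q / b) q k) * z ^ k := by
  have ha' : (1 : ℂ) - a ≠ 0 := sub_ne_zero.mpr (Ne.symm ha)
  have hQfac : ∀ j : ℕ, (1 : ℂ) - q * q ^ j ≠ 0 := by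
    intro j h
    have h1 : (1 : ℂ) = q * q ^ j := sub_eq_zero.mp h
    have h2 : ‖q‖ * ‖q‖ ^ j = 1 := by
      have := congrArg (‖·‖) h1
      simpa [norm_mul, norm_pow] using this.symm
    have h3 : ‖q‖ ^ j ≤ 1 := pow_le_one₀ (norm_nonneg q) hq.le
    nlinarith [norm_nonneg q, pow_nonneg (norm_nonneg q) j]
  have hABfac : ∀ j : ℕ, (1 : ℂ) - a * q / b * q ^ j ≠ 0 := by
    intro j h
    have h1 : a * q / b * q ^ j = 1 := (sub_eq_zero.mp h).symm
    by_cases hqj : (q : ℂ) ^ j = 0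
    · rw [hqj, mul_zero] at h1; exact zero_ne_one h1
    · refine hab j ?_
      rw [zpow_neg, zpow_natCast]
      field_simp at h1 ⊢
      linear_combination h1
  have hQ : ∀ k : ℕ, qPoch q q k ≠ 0 := fun k =>
    Finset.prod_ne_zero_iff.mpr fun j _ => hQfac j
  have hAB : ∀ k : ℕ, qPoch (a * q / b) q k ≠ 0 := fun k =>
    Finset.prod_ne_zero_iff.mpr fun j _ => hABfac j
  set f : ℕ → ℂ := fun k =>
    qPoch (a * q) q k * qPoch (b * q) q k / (qPoch q q k * qPoch (a * q / b) q k) * z ^ k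
    with hf_def
  have hrec : ∀ k : ℕ, f (k + 1) =
      z * ((1 - a * q * q ^ k) * (1 - b * q * q ^ k) /
        ((1 - q * q ^ k) * (1 - a * q / b * q ^ k))) * f k := by
    intro k
    simp only [hf_def, qPoch_succ]
    have hCk := hQ k; have hDk := hAB k; have h3k := hQfac k; have h4k := hABfac k
    field_simp
    ring
  have hqk : Tendsto (fun k : ℕ => (q : ℂ) ^ k) atTop (nhds 0) := by
    apply tendsto_pow_atTop_nhds_zero_of_norm_lt_one
    exact hq
  have h1 : Tendsto (fun k : ℕ => 1 - a * q * q ^ k) atTop (nhds 1) := by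
    simpa using tendsto_const_nhds.sub (hqk.const_mul (a * q))
  have h2 : Tendsto (fun k : ℕ => 1 - b * q * q ^ k) atTop (nhds 1) := by
    simpa using tendsto_const_nhds.sub (hqk.const_mul (b * q))
  have h3 : Tendsto (fun k : ℕ => 1 - q * q ^ k) atTop (nhds 1) := by
    simpa using tendsto_const_nhds.sub (hqk.const_mul q)
  have h4 : Tendsto (fun k : ℕ => 1 - a * q / b * q ^ k) atTop (nhds 1) := by
    simpa using tendsto_const_nhds.sub (hqk.const_mul (a * q / b))
  have hR' : Tendsto (fun k : ℕ => (1 - a * q * q ^ k) * (1 - b * q * q ^ k) /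
      ((1 - q * q ^ k) * (1 - a * q / b * q ^ k))) atTop (nhds 1) := by
    have h := Tendsto.div (f := fun k : ℕ => (1 - a * q * q ^ k) * (1 - b * q * q ^ k))
      (g := fun k : ℕ => (1 - q * q ^ k) * (1 - a * q / b * q ^ k))
      (h1.mul h2) (h3.mul h4) (by norm_num)
    have h' : (1:ℂ) * 1 / (1 * 1) = 1 := by norm_num
    rw [h'] at h; exact h
  have hR : Tendsto (fun k : ℕ =>
      z * ((1 - a * q * q ^ k) * (1 - b * q * q ^ k) /
        ((1 - q * q ^ k) * (1 - a * q / b * q ^ k)))) atTop (nhds z) := by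
    simpa using tendsto_const_nhds.mul hR'
  have hRnorm : Tendsto (fun k : ℕ => ‖z * ((1 - a * q * q ^ k) * (1 - b * q * q ^ k) /
      ((1 - q * q ^ k) * (1 - a * q / b * q ^ k)))‖) atTop (nhds ‖z‖) := hR.norm
  set r : ℝ := (1 + ‖z‖) / 2 with hr_def
  have hzr : ‖z‖ < r := by
    simp only [hr_def]; linarith
  have hr1 : r < 1 := by simp only [hr_def]; linarith
  have hev : ∀ᶠ k in atTop, ‖f (k + 1)‖ ≤ r * ‖f k‖ := by
    filter_upwards [hRnorm.eventually_lt_const hzr] with k hk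
    rw [hrec k, norm_mul]
    exact mul_le_mul_of_nonneg_right hk.le (norm_nonneg _)
  have hf : Summable f := summable_of_ratio_norm_eventually_le hr1 hev
  set g : ℕ → ℂ := fun k => Nat.casesOn k 0 (fun n => b * z * f n) with hg_def
  have hgs : ∀ n : ℕ, g (n + 1) = b * z * f n := fun n => rfl
  have hg0 : g 0 = 0 := rfl
  have hg : Summable g := by
    refine (summable_nat_add_iff 1).mp ?_
    simpa only [hgs] using hf.mul_left (b * z)
  have hgsum : ∑' k, g k = b * z * ∑' k, f k := by
    rw [hg.tsum_eq_zero_add]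
    simp only [hgs, hg0, zero_add]
    exact tsum_mul_left
  have key : ∀ k : ℕ, (1 - a * q ^ (2 * k)) / (1 - a) *
      (qPoch a q k * qPoch b q k / (qPoch q q k * qPoch (a * q / b) q k)) * z ^ k
      = f k - g k := by
    intro k
    cases k with
    | zero => simp [hf_def, hg0, qPoch, div_self ha']
    | succ k =>
        rw [hgs k]
        simp only [hf_def]
        rw [qPoch_succ' a q k, qPoch_succ' b q k, qPoch_succ q q k,
          qPoch_succ (a * q / b) q k, qPoch_succ (a * q) q k, qPoch_succ (b * q) q k,
          pow_succ z k]
        have e1 : a * q ^ (2 * (k + 1)) = b * (a * q / b) * (q * (q ^ k) ^ 2) := by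
          field_simp; ring
        have e2 : (1 : ℂ) - a * q * q ^ k = 1 - b * (a * q / b) * q ^ k := by
          field_simp
        rw [e1, e2]
        exact alg_key a b q z (qPoch (a * q) q k) (qPoch (b * q) q k) (qPoch q q k)
          (qPoch (a * q / b) q k) (q ^ k) (z ^ k) (a * q / b) ha' (hQ k) (hAB k)
          (hQfac k) (hABfac k)
  calc ∑' k : ℕ, (1 - a * q ^ (2 * k)) / (1 - a) *
        (qPoch a q k * qPoch b q k / (qPoch q q k * qPoch (a * q / b) q k)) * z ^ k
      = ∑' k : ℕ, (f k - g k) := tsum_congr key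
    _ = (∑' k, f k) - ∑' k, g k := hf.tsum_sub hg
    _ = (∑' k, f k) - b * z * ∑' k, f k := by rw [hgsum]
    _ = (1 - b * z) * ∑' k, f k := by ring
end
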